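/- Kolmogorov-Chaitin randomness is not decidable: there is no total computable function which, given (the code of) a finite binary string, decides whether its Kolmogorov complexity relative to a fixed universal machine is at least its length. -/

import Mathlib

/-!
If randomness were decidable, searching for the first random string above `2 ^ n` would
be a partial computable function of `n`, so the universal machine would produce that
string from a program of length `|n| + c = log n + O(1)`. But the string is random of
length greater than `n`, so every program for it is longer than `n`: impossible for large
`n`. Random strings above `2 ^ n` exist by counting, since at most `2 ^ m` strings have
complexity at most `m`.
-/

/-- Kolmogorov complexity of `x` relative to the machine `U`: the least binary
length `|p|` of a program `p` with `U p = x`. -/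
noncomputable def K (U : ℕ →. ℕ) (x : ℕ) : ℕ :=
  sInf { n | ∃ p, x ∈ U p ∧ Nat.size p = n }

def IsUniversal (U : ℕ →. ℕ) : Prop :=
  ∀ f : ℕ →. ℕ, Partrec f → ∃ c, ∀ x y, y ∈ f x →
    ∃ p, y ∈ U p ∧ Nat.size p ≤ Nat.size x + c

theorem IsUniversal.exists_mem {U : ℕ →. ℕ} (hU : IsUniversal U) (x : ℕ) : ∃ p, x ∈ U p := by
  obtain ⟨c, hc⟩ := hU (fun n => Part.some n) Computable.id.partrec
  obtain ⟨p, hp, -⟩ := hc x x (Part.mem_some x)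
  exact ⟨p, hp⟩

theorem K_le_size {U : ℕ →. ℕ} {x p : ℕ} (hp : x ∈ U p) : K U x ≤ Nat.size p :=
  Nat.sInf_le ⟨p, hp, rfl⟩

theorem exists_size_eq_K {U : ℕ →. ℕ} (hsurj : ∀ x, ∃ p, x ∈ U p) (x : ℕ) :
    ∃ p, x ∈ U p ∧ Nat.size p = K U x := by
  obtain ⟨p, hp⟩ := hsurj x
  exact Nat.sInf_mem (s := { n | ∃ p, x ∈ U p ∧ Nat.size p = n }) ⟨Nat.size p, p, hp, rfl⟩

/-- Distinct strings need distinct shortest programs, and there are only `2 ^ n`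
programs of length at most `n`. -/
theorem card_le_of_K_le {U : ℕ →. ℕ} (hsurj : ∀ x, ∃ p, x ∈ U p) {s : Finset ℕ} {n : ℕ}
    (hs : ∀ x ∈ s, K U x ≤ n) : s.card ≤ 2 ^ n := by
  choose prog hprog hsize using exists_size_eq_K hsurj
  calc s.card ≤ (Finset.range (2 ^ n)).card := by
        refine Finset.card_le_card_of_injOn prog (fun x hx => ?_) (fun x _ y _ hxy => ?_)
        · rw [Finset.mem_coe, Finset.mem_range, ← Nat.size_le, hsize]
          exact hs x hx
        · exact Part.mem_unique (hprog x) (hxy ▸ hprog y)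
    _ = 2 ^ n := Finset.card_range _

theorem exists_random_ge {U : ℕ →. ℕ} (hsurj : ∀ x, ∃ p, x ∈ U p) (n : ℕ) :
    ∃ x, 2 ^ n ≤ x ∧ Nat.size x ≤ K U x := by
  by_contra! h
  have hcard : (Finset.Ico (2 ^ n) (2 ^ (n + 2))).card ≤ 2 ^ (n + 1) := by
    refine card_le_of_K_le hsurj fun x hx => ?_
    rw [Finset.mem_Ico] at hx
    have := Nat.size_le.2 hx.2
    have := h x hx.1
    omega
  rw [Nat.card_Ico, pow_succ, pow_succ] at hcard
  have := Nat.one_le_two_pow (n := n)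
  omega

theorem ComputablePred.exists_partrec_find_ge {P : ℕ → Prop} (hP : ComputablePred P)
    {t : ℕ → ℕ} (ht : Computable t) (hex : ∀ n, ∃ x, t n ≤ x ∧ P x) :
    ∃ g : ℕ →. ℕ, Partrec g ∧ ∀ n, ∃ y ∈ g n, t n ≤ y ∧ P y := by
  obtain ⟨f, hf, rfl⟩ := ComputablePred.computable_iff.1 hP
  refine ⟨fun n => Nat.rfind fun x => Part.some (decide (t n ≤ x) && f x), ?_, fun n => ?_⟩
  · refine Partrec.rfind (Computable₂.partrec₂ ?_)
    exact Primrec.and.to_comp.comp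
      (Primrec.nat_le.decide.to_comp.comp (ht.comp Computable.fst) Computable.snd)
      (hf.comp Computable.snd)
  · obtain ⟨x, hx, hPx⟩ := hex n
    have hdom : (Nat.rfind fun x => Part.some (decide (t n ≤ x) && f x)).Dom :=
      Nat.rfind_dom'.2 ⟨x, by simp [hx, hPx], fun _ => trivial⟩
    refine ⟨_, Part.get_mem hdom, ?_⟩
    simpa using Nat.rfind_spec (Part.get_mem hdom)

theorem exists_size_add_le (c : ℕ) : ∃ n, Nat.size n + c ≤ n := by
  refine ⟨2 ^ (c + 1), ?_⟩
  rw [Nat.size_pow, pow_succ]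
  have := Nat.lt_two_pow_self (n := c)
  omega

theorem randomness_not_decidable_general (U : ℕ →. ℕ)
    (huniv : ∀ f : ℕ →. ℕ, Partrec f → ∃ c, ∀ x y, y ∈ f x →
      ∃ p, y ∈ U p ∧ Nat.size p ≤ Nat.size x + c) :
    ¬ ComputablePred (fun x : ℕ => Nat.size x ≤ K U x) := by
  intro hdec
  have hpow : Computable fun n : ℕ => 2 ^ n :=
    (Primrec₂.unpaired'.1 Nat.Primrec.pow).to_comp.comp (Computable.const 2) Computable.id
  obtain ⟨g, hg, hgspec⟩ :=
    hdec.exists_partrec_find_ge hpow (exists_random_ge (IsUniversal.exists_mem huniv))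
  obtain ⟨c, hc⟩ := huniv g hg
  obtain ⟨n, hn⟩ := exists_size_add_le c
  obtain ⟨y, hy, hny, hrandom⟩ := hgspec n
  obtain ⟨p, hp, hps⟩ := hc n y hy
  have := K_le_size hp
  have := Nat.lt_size.2 hny
  omega

/-- Kolmogorov–Chaitin randomness is not decidable: for any universal partial
computable function `U` (one which outputs every value, and simulates every
partial computable function with constant overhead in program length), the set
of random strings `{ x | K(x) ≥ |x| }` is not decidable. -/
theorem randomness_not_decidable (U : ℕ →. ℕ) (hU : Partrec U)
    (hsurj : ∀ x, ∃ p, x ∈ U p)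
    (huniv : ∀ f : ℕ →. ℕ, Partrec f → ∃ c, ∀ x y, y ∈ f x →
      ∃ p, y ∈ U p ∧ Nat.size p ≤ Nat.size x + c) :
    ¬ ComputablePred (fun x : ℕ => Nat.size x ≤ K U x) :=
  randomness_not_decidable_general U huniv
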